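/- arXiv:1505.05109 — 2 statements merged into one kernel-verified Lean document; each statement's English description precedes it below -/
import Mathlib

section
/- Let L be a bounded lattice and T ⊆ L ∖ {0} a nonempty subset. Then T is a maximal classification tree in L if and only if T ∪ {0} is a CD-base of L. -/
/-- A subset `X` of a lattice with least element `⊥` is CD-independent if any two of its
elements are comparable or disjoint (meet `⊥`). -/
def CDIndependent {L : Type*} [Lattice L] [BoundedOrder L] (X : Set L) : Prop :=
  ∀ x ∈ X, ∀ y ∈ X, x ≤ y ∨ y ≤ x ∨ x ⊓ y = ⊥

/-- A CD-base is a CD-independent set maximal with respect to inclusion. -/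
def IsCDBase {L : Type*} [Lattice L] [BoundedOrder L] (T : Set L) : Prop :=
  CDIndependent T ∧ ∀ X : Set L, CDIndependent X → T ⊆ X → X = T

/-- A classification tree in a bounded lattice: a set of nonzero elements such that for
every nonzero `x` the set `{t ∈ T | x ≤ t}` is a nonempty chain. -/
def IsClassTree {L : Type*} [Lattice L] [BoundedOrder L] (T : Set L) : Prop :=
  (∀ t ∈ T, t ≠ ⊥) ∧ ∀ x : L, x ≠ ⊥ →
    ({t ∈ T | x ≤ t}.Nonempty ∧ IsChain (· ≤ ·) {t ∈ T | x ≤ t})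

/-- A maximal classification tree: one not properly contained in any classification tree. -/
def IsMaxClassTree {L : Type*} [Lattice L] [BoundedOrder L] (T : Set L) : Prop :=
  IsClassTree T ∧ ∀ T' : Set L, IsClassTree T' → T ⊆ T' → T' = T

private lemma cdindep_comp {L : Type*} [Lattice L] [BoundedOrder L] {X : Set L}
    (hX : CDIndependent X) {a b y : L} (ha : a ∈ X) (hb : b ∈ X)
    (hy : y ≠ ⊥) (hya : y ≤ a) (hyb : y ≤ b) : a ≤ b ∨ b ≤ a := by
  rcases hX a ha b hb with h | h | h
  · exact Or.inl h
  · exact Or.inr h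
  · exact absurd (le_bot_iff.mp (h ▸ le_inf hya hyb)) hy

/-- `T ⊆ L ∖ {⊥}` nonempty is a maximal classification tree iff `T ∪ {⊥}` is a CD-base. -/
theorem maxClassTree_iff_cdBase_union_bot
    {L : Type*} [Lattice L] [BoundedOrder L]
    (T : Set L) (hbot : ⊥ ∉ T) (hne : T.Nonempty) :
    IsMaxClassTree T ↔ IsCDBase (T ∪ {⊥}) := by
  constructor
  · rintro ⟨⟨hT0, hT⟩, hmax⟩
    constructor
    · -- CD-independence of T ∪ {⊥}
      rintro x (hx | hx) y (hy | hy)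
      · by_cases h : x ⊓ y = ⊥
        · exact Or.inr (Or.inr h)
        · have hchain := (hT (x ⊓ y) h).2
          rcases eq_or_ne x y with rfl | hne'
          · exact Or.inl le_rfl
          · exact (hchain ⟨hx, inf_le_left⟩ ⟨hy, inf_le_right⟩ hne').imp id Or.inl
      · simp only [Set.mem_singleton_iff] at hy; subst hy
        exact Or.inr (Or.inl bot_le)
      · simp only [Set.mem_singleton_iff] at hx; subst hx
        exact Or.inl bot_le
      · simp only [Set.mem_singleton_iff] at hx; subst hx
        exact Or.inl bot_le
    · intro X hX hsub
      refine Set.Subset.antisymm (fun x hx => ?_) hsub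
      by_cases hxbot : x = ⊥
      · exact Or.inr (by simp [hxbot])
      · left
        have hkey : T ∪ {x} = T := by
          apply hmax
          · constructor
            · rintro t (ht | ht)
              · exact hT0 t ht
              · simp only [Set.mem_singleton_iff] at ht; subst ht; exact hxbot
            · intro y hy
              obtain ⟨⟨t, ht, hyt⟩, hchain⟩ := hT y hy
              refine ⟨⟨t, Or.inl ht, hyt⟩, ?_⟩
              rintro a ⟨(ha | ha), hya⟩ b ⟨(hb | hb), hyb⟩ hab
              · exact hchain ⟨ha, hya⟩ ⟨hb, hyb⟩ hab
              · simp only [Set.mem_singleton_iff] at hb; subst hb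
                exact cdindep_comp hX (hsub (Or.inl ha)) hx hy hya hyb
              · simp only [Set.mem_singleton_iff] at ha; subst ha
                exact cdindep_comp hX hx (hsub (Or.inl hb)) hy hya hyb
              · simp only [Set.mem_singleton_iff] at ha hb
                exact absurd (ha.trans hb.symm) hab
          · exact Set.subset_union_left
        have : x ∈ T ∪ {x} := Or.inr rfl
        rwa [hkey] at this
  · rintro ⟨hCD, hmaxCD⟩
    -- first: ⊤ ∈ T
    have htopmem : (⊤ : L) ∈ T ∪ {⊥} := by
      have h : insert (⊤ : L) (T ∪ {⊥}) = T ∪ {⊥} := by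
        apply hmaxCD
        · rintro x hx y hy
          rcases hx with rfl | hx
          · exact Or.inr (Or.inl le_top)
          · rcases hy with rfl | hy
            · exact Or.inl le_top
            · exact hCD x hx y hy
        · exact Set.subset_insert _ _
      rw [← h]; exact Set.mem_insert _ _
    obtain ⟨t0, ht0⟩ := hne
    have htopne : (⊤ : L) ≠ ⊥ := by
      intro h
      exact hbot (by rwa [show t0 = ⊥ from le_bot_iff.mp (h ▸ le_top)] at ht0)
    have htop : (⊤ : L) ∈ T := by
      rcases htopmem with h | h
      · exact h
      · exact absurd h htopne
    have hTtree : IsClassTree T := by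
      refine ⟨fun t ht h => hbot (h ▸ ht), fun x hx => ?_⟩
      refine ⟨⟨⊤, htop, le_top⟩, ?_⟩
      rintro a ⟨ha, hxa⟩ b ⟨hb, hxb⟩ hab
      exact cdindep_comp hCD (Or.inl ha) (Or.inl hb) hx hxa hxb
    refine ⟨hTtree, fun T' hT' hsub => ?_⟩
    refine Set.Subset.antisymm (fun x hx => ?_) hsub
    have hxbot : x ≠ ⊥ := hT'.1 x hx
    have hkey : insert x (T ∪ {⊥}) = T ∪ {⊥} := by
      apply hmaxCD
      · rintro a ha b hb
        rcases ha with rfl | ha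
        · rcases hb with rfl | hb
          · exact Or.inl le_rfl
          · rcases hb with hb | hb
            · -- a = x, b ∈ T
              by_cases h : a ⊓ b = ⊥
              · exact Or.inr (Or.inr h)
              · have hchain := (hT'.2 (a ⊓ b) h).2
                rcases eq_or_ne a b with rfl | hne'
                · exact Or.inl le_rfl
                · exact (hchain ⟨hx, inf_le_left⟩ ⟨hsub hb, inf_le_right⟩ hne').imp id Or.inl
            · simp only [Set.mem_singleton_iff] at hb; subst hb
              exact Or.inr (Or.inl bot_le)
        · rcases hb with rfl | hb
          · rcases ha with ha | ha
            · by_cases h : a ⊓ b = ⊥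
              · exact Or.inr (Or.inr h)
              · have hchain := (hT'.2 (a ⊓ b) h).2
                rcases eq_or_ne a b with rfl | hne'
                · exact Or.inl le_rfl
                · exact (hchain ⟨hsub ha, inf_le_left⟩ ⟨hx, inf_le_right⟩ hne').imp id Or.inl
            · simp only [Set.mem_singleton_iff] at ha; subst ha
              exact Or.inl bot_le
          · exact hCD a ha b hb
      · exact Set.subset_insert _ _
    have : x ∈ T ∪ {⊥} := hkey ▸ Set.mem_insert x _
    rcases this with h | h
    · exact h
    · exact absurd h hxbot
end

section
/- Let L be a complete atomistic lattice (every nonzero element of L is a join of atoms). Then every CD-base of L contains all atoms of L, and every maximal classification tree of L contains all atoms of L. -/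
/-- In a complete atomistic lattice, every CD-base and every maximal classification tree
contains all atoms. -/
theorem cdBase_and_maxClassTree_contain_atoms
    {L : Type*} [CompleteLattice L]
    (hatomistic : ∀ x : L, x ≠ ⊥ → ∃ S : Set L, (∀ a ∈ S, IsAtom a) ∧ x = sSup S) :
    (∀ T : Set L, IsCDBase T → ∀ a : L, IsAtom a → a ∈ T) ∧
    (∀ T : Set L, IsMaxClassTree T → ∀ a : L, IsAtom a → a ∈ T) := by
  constructor
  · intro T hT a ha
    have h : CDIndependent (insert a T) := by
      intro x hx y hy
      rcases hx with rfl | hx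
      · rcases hy with rfl | hy
        · exact Or.inl le_rfl
        · rcases ha.le_iff.mp (inf_le_left : x ⊓ y ≤ x) with h | h
          · exact Or.inr (Or.inr h)
          · exact Or.inl (inf_eq_left.mp h)
      · rcases hy with rfl | hy
        · rcases ha.le_iff.mp (inf_le_right : x ⊓ y ≤ y) with h | h
          · exact Or.inr (Or.inr h)
          · exact Or.inr (Or.inl (inf_eq_right.mp h))
        · exact hT.1 x hx y hy
    have heq := hT.2 _ h (Set.subset_insert a T)
    rw [← heq]; exact Set.mem_insert a T
  · intro T hT a ha
    have h : IsClassTree (insert a T) := by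
      constructor
      · intro t ht
        rcases ht with rfl | ht
        · exact ha.1
        · exact hT.1.1 t ht
      · intro x hx
        obtain ⟨⟨t0, ht0⟩, hchain⟩ := hT.1.2 x hx
        refine ⟨⟨t0, Set.mem_insert_of_mem a ht0.1, ht0.2⟩, ?_⟩
        intro s hs t ht hst
        rcases hs.1 with rfl | hsT
        · rcases ht.1 with rfl | htT
          · exact absurd rfl hst
          · have hxa : x = s := (ha.le_iff.mp hs.2).resolve_left hx
            exact Or.inl (hxa ▸ ht.2)
        · rcases ht.1 with rfl | htT
          · have hxa : x = t := (ha.le_iff.mp ht.2).resolve_left hx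
            exact Or.inr (hxa ▸ hs.2)
          · exact hchain ⟨hsT, hs.2⟩ ⟨htT, ht.2⟩ hst
    have heq := hT.2 _ h (Set.subset_insert a T)
    rw [← heq]; exact Set.mem_insert a T
end
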